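/- For N ≡ 1 (mod 4), the linear map Ξ_N defined by Ξ_N(σ) = (⟨I^{⊗N}, σ⟩ I + ⟨X^{⊗N}, σ⟩ X + ⟨Y^{⊗N}, σ⟩ Y + ⟨Z^{⊗N}, σ⟩ Z)/2 is completely positive. -/

import Mathlib

open Matrix Complex ComplexOrder

noncomputable section

/-- Single-qubit Pauli matrices. -/
def pI : Matrix (Fin 2) (Fin 2) ℂ := 1
def pX : Matrix (Fin 2) (Fin 2) ℂ := !![0, 1; 1, 0]
def pY : Matrix (Fin 2) (Fin 2) ℂ := !![0, -Complex.I; Complex.I, 0]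
def pZ : Matrix (Fin 2) (Fin 2) ℂ := !![1, 0; 0, -1]

/-- `N`-fold tensor power of a single-qubit matrix. -/
def tpow (M : Matrix (Fin 2) (Fin 2) ℂ) (N : ℕ) :
    Matrix (Fin N → Fin 2) (Fin N → Fin 2) ℂ :=
  Matrix.of fun x y => ∏ i, M (x i) (y i)

/-- Hilbert–Schmidt inner product `⟨A,B⟩ = tr(A* B)`. -/
def hsInner {n : Type*} [Fintype n] (A B : Matrix n n ℂ) : ℂ := (Aᴴ * B).trace

/-- The map `Ξ_N`. -/
def Xi (N : ℕ) (σ : Matrix (Fin N → Fin 2) (Fin N → Fin 2) ℂ) :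
    Matrix (Fin 2) (Fin 2) ℂ :=
  (1/2 : ℂ) • (hsInner (tpow pI N) σ • pI + hsInner (tpow pX N) σ • pX
    + hsInner (tpow pY N) σ • pY + hsInner (tpow pZ N) σ • pZ)

/-!
Complex conjugation fixes `I`, `X`, `Z` and negates `Y`, and `N` is odd, so the Choi matrix of `Ξ_N`
is `C = ½ (1 + X ⊗ X^{⊗N} - Y ⊗ Y^{⊗N} + Z ⊗ Z^{⊗N})`. The operators `A = X ⊗ X^{⊗N}` and
`B = Z ⊗ Z^{⊗N}` are commuting Hermitian involutions with
`A B = (XZ) ⊗ (XZ)^{⊗N} = (-i)^{N+1} Y ⊗ Y^{⊗N} = -Y ⊗ Y^{⊗N}`, because `N + 1 ≡ 2 (mod 4)`.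
Hence `C = ½ (1 + A)(1 + B)`, twice a product of commuting projections, is positive semidefinite,
and a map with positive semidefinite Choi matrix is completely positive: its ampliation is the
compression `V* (C ⊗ σ) V` of a positive semidefinite matrix.
-/

open scoped Kronecker

section Choi

variable {𝕜 : Type*} [RCLike 𝕜] {m n : Type*} [Fintype m] [Fintype n]

def choiMap (C : Matrix (m × n) (m × n) 𝕜) (σ : Matrix n n 𝕜) : Matrix m m 𝕜 :=
  Matrix.of fun a b => ∑ x, ∑ y, C (a, x) (b, y) * σ x y

/-- The map `Φ ⊗ id_L`. -/
def ampliation (Φ : Matrix n n 𝕜 → Matrix m m 𝕜) (L : Type*) (σ : Matrix (n × L) (n × L) 𝕜) :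
    Matrix (m × L) (m × L) 𝕜 :=
  Matrix.of fun p q => Φ (Matrix.of fun x y => σ (x, p.2) (y, q.2)) p.1 q.1

theorem Matrix.PosSemidef.ampliation_choiMap [DecidableEq m] [DecidableEq n]
    {L : Type*} [Fintype L] [DecidableEq L] {C : Matrix (m × n) (m × n) 𝕜}
    (hC : C.PosSemidef) {σ : Matrix (n × L) (n × L) 𝕜} (hσ : σ.PosSemidef) :
    (ampliation (choiMap C) L σ).PosSemidef := by
  let V : Matrix ((m × n) × (n × L)) (m × L) 𝕜 :=
    of fun i p => if i.1.1 = p.1 ∧ i.1.2 = i.2.1 ∧ i.2.2 = p.2 then 1 else 0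
  have hV : ampliation (choiMap C) L σ = Vᴴ * (C ⊗ₖ σ) * V := by
    ext p q
    simp [V, ampliation, choiMap, Matrix.mul_apply, Fintype.sum_prod_type, ite_and,
      apply_ite (starRingEnd 𝕜)]
    exact Finset.sum_comm
  rw [hV]
  exact (hC.kronecker hσ).conjTranspose_mul_mul_same V

end Choi

theorem Matrix.posSemidef_one_add_mul_one_add {𝕜 n : Type*} [RCLike 𝕜] [Fintype n]
    [DecidableEq n] {A B : Matrix n n 𝕜} (hA : A.IsHermitian) (hB : B.IsHermitian)
    (hA2 : A * A = 1) (hB2 : B * B = 1) (hAB : A * B = B * A) :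
    ((1 + A) * (1 + B)).PosSemidef := by
  have hBA : (1 + B) * (1 + A) = (1 + A) * (1 + B) := by
    noncomm_ring
    rw [hAB]
  have hsq : ∀ M : Matrix n n 𝕜, M * M = 1 → (1 + M) * (1 + M) = (2 : 𝕜) • (1 + M) := by
    intro M hM
    simp only [add_mul, mul_add, one_mul, mul_one, hM, two_smul]
    abel
  have hQ : ((1 + A) * (1 + B))ᴴ = (1 + A) * (1 + B) := by
    simp only [conjTranspose_mul, conjTranspose_add, conjTranspose_one, hA.eq, hB.eq, hBA]
  have hQQ : ((1 + A) * (1 + B))ᴴ * ((1 + A) * (1 + B)) = (4 : 𝕜) • ((1 + A) * (1 + B)) :=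
    calc ((1 + A) * (1 + B))ᴴ * ((1 + A) * (1 + B))
        = (1 + A) * ((1 + B) * (1 + A)) * (1 + B) := by simp only [hQ, mul_assoc]
      _ = ((1 + A) * (1 + A)) * ((1 + B) * (1 + B)) := by rw [hBA]; simp only [mul_assoc]
      _ = (4 : 𝕜) • ((1 + A) * (1 + B)) := by
        rw [hsq A hA2, hsq B hB2, smul_mul_smul_comm]
        norm_num
  have hsqrt : (1 + A) * (1 + B)
      = ((1 / 2 : 𝕜) • ((1 + A) * (1 + B)))ᴴ * ((1 / 2 : 𝕜) • ((1 + A) * (1 + B))) := by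
    rw [conjTranspose_smul, smul_mul_smul_comm, hQQ, smul_smul]
    norm_num
  rw [hsqrt]
  exact posSemidef_conjTranspose_mul_self _

theorem hsInner_eq_sum {n : Type*} [Fintype n] (A B : Matrix n n ℂ) :
    hsInner A B = ∑ x, ∑ y, star (A x y) * B x y := by
  rw [hsInner, Matrix.trace, Finset.sum_comm]
  simp [Matrix.mul_apply]

theorem tpow_mul (M M' : Matrix (Fin 2) (Fin 2) ℂ) (N : ℕ) :
    tpow M N * tpow M' N = tpow (M * M') N := by
  ext x y
  simp only [tpow, Matrix.mul_apply, Matrix.of_apply, ← Finset.prod_mul_distrib]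
  exact (Fintype.prod_sum fun i c => M (x i) c * M' c (y i)).symm

theorem tpow_one (N : ℕ) : tpow 1 N = 1 := by
  ext x y
  simp [tpow, Matrix.one_apply, Finset.prod_boole, funext_iff]

theorem tpow_smul (c : ℂ) (M : Matrix (Fin 2) (Fin 2) ℂ) (N : ℕ) :
    tpow (c • M) N = c ^ N • tpow M N := by
  ext x y
  simp [tpow, Finset.prod_mul_distrib]

theorem conjTranspose_tpow (M : Matrix (Fin 2) (Fin 2) ℂ) (N : ℕ) :
    (tpow M N)ᴴ = tpow Mᴴ N := by
  ext x y
  simp [tpow]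

theorem map_star_tpow (M : Matrix (Fin 2) (Fin 2) ℂ) (N : ℕ) :
    (tpow M N).map star = tpow (M.map star) N := by
  ext x y
  simp [tpow]

theorem isHermitian_pX : pX.IsHermitian := by
  ext i j; fin_cases i <;> fin_cases j <;> simp [pX]

theorem isHermitian_pZ : pZ.IsHermitian := by
  ext i j; fin_cases i <;> fin_cases j <;> simp [pZ]

theorem pX_mul_pX : pX * pX = 1 := by
  ext i j; fin_cases i <;> fin_cases j <;> simp [pX]

theorem pZ_mul_pZ : pZ * pZ = 1 := by
  ext i j; fin_cases i <;> fin_cases j <;> simp [pZ]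

theorem pX_mul_pZ : pX * pZ = -Complex.I • pY := by
  ext i j; fin_cases i <;> fin_cases j <;> simp [pX, pZ, pY]

theorem pZ_mul_pX : pZ * pX = Complex.I • pY := by
  ext i j; fin_cases i <;> fin_cases j <;> simp [pX, pZ, pY]

theorem map_star_pX : pX.map star = pX := by
  ext i j; fin_cases i <;> fin_cases j <;> simp [pX]

theorem map_star_pY : pY.map star = (-1 : ℂ) • pY := by
  ext i j; fin_cases i <;> fin_cases j <;> simp [pY]

theorem map_star_pZ : pZ.map star = pZ := by
  ext i j; fin_cases i <;> fin_cases j <;> simp [pZ]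

theorem kronecker_tpow_mul (M M' : Matrix (Fin 2) (Fin 2) ℂ) (N : ℕ) :
    (M ⊗ₖ tpow M N) * (M' ⊗ₖ tpow M' N) = (M * M') ⊗ₖ tpow (M * M') N := by
  rw [← Matrix.mul_kronecker_mul, tpow_mul]

theorem smul_kronecker_tpow_smul (c : ℂ) (M : Matrix (Fin 2) (Fin 2) ℂ) (N : ℕ) :
    (c • M) ⊗ₖ tpow (c • M) N = c ^ (N + 1) • (M ⊗ₖ tpow M N) := by
  rw [tpow_smul, Matrix.smul_kronecker, Matrix.kronecker_smul, smul_smul, pow_succ']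

theorem isHermitian_kronecker_tpow {M : Matrix (Fin 2) (Fin 2) ℂ} (hM : M.IsHermitian) (N : ℕ) :
    (M ⊗ₖ tpow M N).IsHermitian := by
  rw [Matrix.IsHermitian, Matrix.conjTranspose_kronecker, conjTranspose_tpow, hM.eq]

theorem kronecker_tpow_mul_self {M : Matrix (Fin 2) (Fin 2) ℂ} (hM : M * M = 1) (N : ℕ) :
    (M ⊗ₖ tpow M N) * (M ⊗ₖ tpow M N) = 1 := by
  rw [kronecker_tpow_mul, hM, tpow_one, Matrix.one_kronecker_one]

/-- The conjugates come from the conjugate-linear slot of `hsInner`. -/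
def xiChoi (N : ℕ) : Matrix (Fin 2 × (Fin N → Fin 2)) (Fin 2 × (Fin N → Fin 2)) ℂ :=
  (1 / 2 : ℂ) • (pI ⊗ₖ (tpow pI N).map star + pX ⊗ₖ (tpow pX N).map star
    + pY ⊗ₖ (tpow pY N).map star + pZ ⊗ₖ (tpow pZ N).map star)

theorem Xi_eq_choiMap (N : ℕ) : Xi N = choiMap (xiChoi N) := by
  ext τ a b
  simp only [Xi, xiChoi, choiMap, hsInner_eq_sum, Matrix.smul_apply, Matrix.add_apply,
    Matrix.kroneckerMap_apply, Matrix.map_apply, Matrix.of_apply, smul_eq_mul, Finset.mul_sum,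
    Finset.sum_mul, ← Finset.sum_add_distrib]
  refine Finset.sum_congr rfl fun x _ => Finset.sum_congr rfl fun y _ => ?_
  ring

theorem xiChoi_eq {N : ℕ} (hN : N % 4 = 1) :
    xiChoi N = (1 / 2 : ℂ) • ((1 + pX ⊗ₖ tpow pX N) * (1 + pZ ⊗ₖ tpow pZ N)) := by
  obtain ⟨k, rfl⟩ : ∃ k, N = 4 * k + 1 := ⟨N / 4, by omega⟩
  have hIpow : Complex.I ^ (4 * k + 1 + 1) = -1 := by
    rw [show 4 * k + 1 + 1 = 4 * k + 2 by ring, pow_add, pow_mul]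
    simp
  have hXZ : (pX ⊗ₖ tpow pX _) * (pZ ⊗ₖ tpow pZ _) = -(pY ⊗ₖ tpow pY (4 * k + 1)) := by
    rw [kronecker_tpow_mul, pX_mul_pZ, smul_kronecker_tpow_smul,
      Even.neg_pow ⟨2 * k + 1, by omega⟩, hIpow, neg_one_smul]
  have hY : pY ⊗ₖ tpow ((-1 : ℂ) • pY) (4 * k + 1) = -(pY ⊗ₖ tpow pY (4 * k + 1)) := by
    rw [tpow_smul, Matrix.kronecker_smul, Odd.neg_one_pow ⟨2 * k, by omega⟩, neg_one_smul]
  have hId : pI ⊗ₖ tpow (pI.map star) (4 * k + 1) = 1 := by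
    simp [pI, tpow_one]
  simp only [xiChoi, map_star_tpow, map_star_pX, map_star_pY, map_star_pZ, hId, hY, add_mul,
    mul_add, one_mul, mul_one, hXZ]
  congr 1
  abel

theorem xiChoi_posSemidef {N : ℕ} (hN : N % 4 = 1) : (xiChoi N).PosSemidef := by
  have hcomm : (pX ⊗ₖ tpow pX N) * (pZ ⊗ₖ tpow pZ N)
      = (pZ ⊗ₖ tpow pZ N) * (pX ⊗ₖ tpow pX N) := by
    rw [kronecker_tpow_mul, kronecker_tpow_mul, pX_mul_pZ, pZ_mul_pX, smul_kronecker_tpow_smul,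
      smul_kronecker_tpow_smul, Even.neg_pow ⟨N / 2 + 1, by omega⟩]
  rw [xiChoi_eq hN]
  exact (Matrix.posSemidef_one_add_mul_one_add (isHermitian_kronecker_tpow isHermitian_pX N)
    (isHermitian_kronecker_tpow isHermitian_pZ N) (kronecker_tpow_mul_self pX_mul_pX N)
    (kronecker_tpow_mul_self pZ_mul_pZ N) hcomm).smul (by positivity)

/-- for `N ≡ 1 (mod 4)`, the map `Ξ_N` is completely positive:
for every finite-dimensional auxiliary space `L`, the ampliation `Ξ_N ⊗ id_L`
maps positive semidefinite operators to positive semidefinite operators. -/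
theorem Xi_completely_positive (N : ℕ) (hN : N % 4 = 1)
    (L : Type) [Fintype L] [DecidableEq L]
    (σ : Matrix ((Fin N → Fin 2) × L) ((Fin N → Fin 2) × L) ℂ)
    (hσ : σ.PosSemidef) :
    (Matrix.of fun p q : Fin 2 × L =>
      Xi N (Matrix.of fun x y => σ (x, p.2) (y, q.2)) p.1 q.1).PosSemidef := by
  change (ampliation (Xi N) L σ).PosSemidef
  rw [Xi_eq_choiMap]
  exact (xiChoi_posSemidef hN).ampliation_choiMap hσ
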